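/- Let Γ be a finite simplicial graph whose vertices are labeled by nontrivial cyclic groups, let G_Γ be the associated graph product, and let v, w be distinct non-adjacent vertices lying in the same connected component of Γ. Let C₀ be the connected component of Γ∖st(v) containing w and D₀ the connected component of Γ∖st(w) containing v. Then the partial conjugations π_{v,C₀} and π_{w,D₀} do NOT commute in Aut(G_Γ); indeed π_{v,C₀}(π_{w,D₀}(v)) = vwvw⁻¹v⁻¹ while π_{w,D₀}(π_{v,C₀}(v)) = wvw⁻¹, and these elements are distinct in G_Γ. -/

import Mathlib

open Monoid

namespace ArXiv

universe u uG

variable {V : Type u}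

/-- The star of a vertex: the vertex together with its neighbors. -/
def star (Γ : SimpleGraph V) (v : V) : Set V := insert v (Γ.neighborSet v)

/-- `C ⊆ V` is the vertex set of a connected component of the full subgraph of `Γ`
induced on `S`. -/
def IsCompOf (Γ : SimpleGraph V) (S : Set V) (C : Set V) : Prop :=
  ∃ c : (Γ.induce S).ConnectedComponent, C = Subtype.val '' c.supp

/-- `Γ` has a separating intersection of links: there are distinct non-adjacent vertices
`v, w` such that some connected component of `Γ ∖ (lk(v) ∩ lk(w))` contains neither `v`
nor `w`. -/
def HasSIL (Γ : SimpleGraph V) : Prop :=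
  ∃ v w : V, v ≠ w ∧ ¬ Γ.Adj v w ∧
    ∃ C : Set V, IsCompOf Γ ((Γ.neighborSet v ∩ Γ.neighborSet w)ᶜ) C ∧ v ∉ C ∧ w ∉ C

variable (Γ : SimpleGraph V) (G : V → Type uG) [∀ v, Group (G v)]

/-- The commutator relators defining the graph product. -/
def rels : Set (Monoid.CoprodI G) :=
  {x | ∃ (v w : V) (_ : Γ.Adj v w) (g : G v) (h : G w),
    x = CoprodI.of g * CoprodI.of h * (CoprodI.of g)⁻¹ * (CoprodI.of h)⁻¹}

/-- The graph product of the vertex groups `G v` over the graph `Γ`: the quotient of the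
free product by the normal closure of the commutators of adjacent vertex groups. -/
def GraphProduct : Type (max u uG) :=
  Monoid.CoprodI G ⧸ Subgroup.normalClosure (rels Γ G)

instance : Group (GraphProduct Γ G) :=
  inferInstanceAs (Group (Monoid.CoprodI G ⧸ Subgroup.normalClosure (rels Γ G)))

/-- The canonical map from a vertex group into the graph product. -/
def of {v : V} : G v →* GraphProduct Γ G :=
  (QuotientGroup.mk' (Subgroup.normalClosure (rels Γ G))).comp CoprodI.of

theorem of_commute {v w : V} (h : Γ.Adj v w) (g : G v) (k : G w) :
    Commute (of Γ G g) (of Γ G k) := by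
  rw [← commutatorElement_eq_one_iff_commute]
  have hmem : (CoprodI.of g * CoprodI.of k * (CoprodI.of g)⁻¹ * (CoprodI.of k)⁻¹ :
      Monoid.CoprodI G) ∈ Subgroup.normalClosure (rels Γ G) :=
    Subgroup.subset_normalClosure ⟨v, w, h, g, k, rfl⟩
  have h1 : (QuotientGroup.mk' (Subgroup.normalClosure (rels Γ G)))
      (CoprodI.of g * CoprodI.of k * (CoprodI.of g)⁻¹ * (CoprodI.of k)⁻¹) = 1 :=
    (QuotientGroup.eq_one_iff _).mpr hmem
  simp only [map_mul, map_inv] at h1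
  rw [commutatorElement_def]
  exact h1

/-- `π` is the partial conjugation `π_{v,C}`, for vertex groups with chosen generators
`gen`: it conjugates the generators in `C` by (the generator of) `v` and fixes all other
generators. -/
def IsPartialConj (gen : ∀ v, G v) (π : MulAut (GraphProduct Γ G)) (v : V) (C : Set V) :
    Prop :=
  (∀ u ∈ C, ∀ g : G u, π (of Γ G g) = of Γ G (gen v) * of Γ G g * (of Γ G (gen v))⁻¹) ∧
  (∀ u ∉ C, ∀ g : G u, π (of Γ G g) = of Γ G g)

/-- `π` is the partial conjugation `π_{a,C}` by the element `a` of the vertex group `G v`: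
it conjugates the vertex groups in `C` by `a` and fixes all other vertex groups. -/
def IsPartialConjBy {v : V} (a : G v) (π : MulAut (GraphProduct Γ G)) (C : Set V) : Prop :=
  (∀ u ∈ C, ∀ g : G u, π (of Γ G g) = of Γ G a * of Γ G g * (of Γ G a)⁻¹) ∧
  (∀ u ∉ C, ∀ g : G u, π (of Γ G g) = of Γ G g)

/-- The vertex set of the graph `Γ̃`: pairs `p_{v,C}` where `C` is a connected component
of `Γ ∖ st(v)`. -/
def TV : Type u := {p : V × Set V // IsCompOf Γ ((star Γ p.1)ᶜ) p.2}

/-- The graph `Γ̃`: vertices `p_{v,C}` and `p_{w,D}` are joined by an edge unless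
`v, w` are distinct non-adjacent vertices with `v ∈ D` and `w ∈ C`. -/
def tilde : SimpleGraph (TV Γ) where
  Adj p q := p ≠ q ∧
    ¬(p.1.1 ≠ q.1.1 ∧ ¬ Γ.Adj p.1.1 q.1.1 ∧ p.1.1 ∈ q.1.2 ∧ q.1.1 ∈ p.1.2)
  symm := ⟨by
    rintro p q ⟨h1, h2⟩
    exact ⟨h1.symm, fun ⟨a, b, c, d⟩ => h2 ⟨a.symm, fun e => b e.symm, d, c⟩⟩⟩
  loopless := ⟨fun p h => h.1 rfl⟩

/-- The graph product `G_{Γ̃}`, where the vertex `p_{v,C}` is labeled by (a copy of) the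
group `G v`. -/
abbrev TildeProduct : Type (max u uG) :=
  GraphProduct (tilde Γ) (fun p : TV Γ => G p.1.1)

/-- The element `p_v = ∏_C p_{v,C} ∈ G_{Γ̃}`, the product over all connected components
`C` of `Γ ∖ st(v)` (the factors pairwise commute). -/
noncomputable def pvert [Finite V] (gen : ∀ v, G v) (v : V) : TildeProduct Γ G :=
  haveI : Fintype {C : Set V // IsCompOf Γ ((star Γ v)ᶜ) C} := Fintype.ofFinite _
  Finset.noncommProd (Finset.univ : Finset {C : Set V // IsCompOf Γ ((star Γ v)ᶜ) C})
    (fun c => of (tilde Γ) (fun p : TV Γ => G p.1.1) (v := ⟨(v, c.1), c.2⟩) (gen v))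
    (by
      intro a _ b _ hab
      have hadj : (tilde Γ).Adj ⟨(v, a.1), a.2⟩ ⟨(v, b.1), b.2⟩ := by
        show _ ∧ _
        refine ⟨fun h => hab (Subtype.ext (congrArg (fun x : TV Γ => x.1.2) h)), ?_⟩
        rintro ⟨hne, -⟩
        exact hne rfl
      exact of_commute (tilde Γ) (fun p : TV Γ => G p.1.1) hadj (gen v) (gen v))

/-- The set `Δ` of vertices adjacent to every other vertex of `Γ`. -/
def Delta (Γ : SimpleGraph V) : Set V := {v | ∀ u, u ≠ v → Γ.Adj v u}

/-- The subgroup of the graph product generated by the vertex groups `G v`, `v ∈ T`. -/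
def vertexSubgroup (T : Set V) : Subgroup (GraphProduct Γ G) :=
  Subgroup.closure {x | ∃ v ∈ T, ∃ g : G v, x = of Γ G g}

/-- `w` is a reduced word for the element `g` of the graph product: a minimal length
expression of `g` as a product of nontrivial elements of vertex groups. -/
def IsReducedWord (g : GraphProduct Γ G) (w : List (Σ v : V, G v)) : Prop :=
  (w.map fun l => of Γ G l.2).prod = g ∧ (∀ l ∈ w, l.2 ≠ 1) ∧
    ∀ w' : List (Σ v : V, G v), (w'.map fun l => of Γ G l.2).prod = g →
      w.length ≤ w'.length

/-!
A vertex never lies in a component of the complement of its own star, so `π_{v,C₀}` fixes `v`,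
and both composites can be computed directly. They differ because sending every vertex group
other than `G v` and `G w` to `1` is a retraction of the graph product onto the free product
`G v * G w` (as `v` and `w` are not adjacent), where `vwvw⁻¹v⁻¹` and `wvw⁻¹` are distinct
reduced words.
-/

theorem IsCompOf.subset {Γ : SimpleGraph V} {S C : Set V} (hC : IsCompOf Γ S C) : C ⊆ S := by
  obtain ⟨c, rfl⟩ := hC
  rintro _ ⟨x, -, rfl⟩
  exact x.2

theorem not_mem_of_isCompOf_compl_star {Γ : SimpleGraph V} {v : V} {C : Set V}
    (hC : IsCompOf Γ ((star Γ v)ᶜ) C) : v ∉ C :=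
  fun hv => hC.subset hv (Set.mem_insert v _)

namespace GraphProduct

variable {Γ G} {H : Type*} [Group H]

theorem rels_le_ker_coprodI_lift (f : ∀ u, G u →* H)
    (hf : ∀ u u', Γ.Adj u u' → ∀ (g : G u) (k : G u'), Commute (f u g) (f u' k)) :
    Subgroup.normalClosure (rels Γ G) ≤ (CoprodI.lift f).ker := by
  refine Subgroup.normalClosure_le_normal ?_
  rintro _ ⟨u, u', huu', g, k, rfl⟩
  simpa [← commutatorElement_def, commutatorElement_eq_one_iff_commute] using hf u u' huu' g k

def lift (f : ∀ u, G u →* H)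
    (hf : ∀ u u', Γ.Adj u u' → ∀ (g : G u) (k : G u'), Commute (f u g) (f u' k)) :
    GraphProduct Γ G →* H :=
  QuotientGroup.lift _ (CoprodI.lift f) (rels_le_ker_coprodI_lift f hf)

@[simp]
theorem lift_of (f : ∀ u, G u →* H)
    (hf : ∀ u u', Γ.Adj u u' → ∀ (g : G u) (k : G u'), Commute (f u g) (f u' k))
    {u : V} (g : G u) : lift f hf (of Γ G g) = f u g :=
  (QuotientGroup.lift_mk' _ _ _).trans (CoprodI.lift_of f g)

end GraphProduct

theorem exists_retraction_coprodI {v w : V} (hadj : ¬ Γ.Adj v w) :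
    ∃ φ : GraphProduct Γ G →* Monoid.CoprodI G,
      (∀ g : G v, φ (of Γ G g) = CoprodI.of g) ∧ (∀ g : G w, φ (of Γ G g) = CoprodI.of g) := by
  classical
  let f : ∀ u, G u →* Monoid.CoprodI G := fun u => if u = v ∨ u = w then CoprodI.of else 1
  have hf : ∀ u u', Γ.Adj u u' → ∀ (g : G u) (k : G u'), Commute (f u g) (f u' k) := by
    intro u u' huu' g k
    by_cases hu : u = v ∨ u = w
    · by_cases hu' : u' = v ∨ u' = w
      · rcases hu with rfl | rfl <;> rcases hu' with rfl | rfl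
        exacts [(Γ.loopless.irrefl _ huu').elim, (hadj huu').elim,
          (hadj huu'.symm).elim, (Γ.loopless.irrefl _ huu').elim]
      · simp [f, hu']
    · simp [f, hu]
  exact ⟨GraphProduct.lift f hf, fun g => by simp [f], fun g => by simp [f]⟩

theorem CoprodI.of_mul_of_mul_of_mul_inv_mul_inv_ne {ι : Type*} {M : ι → Type*}
    [∀ i, Group (M i)] {i j : ι} (hij : i ≠ j) {a : M i} {b : M j} (ha : a ≠ 1) (hb : b ≠ 1) :
    CoprodI.of a * CoprodI.of b * CoprodI.of a * (CoprodI.of b)⁻¹ * (CoprodI.of a)⁻¹ ≠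
      CoprodI.of b * CoprodI.of a * (CoprodI.of b)⁻¹ := by
  classical
  intro h
  let W₁ : CoprodI.Word M :=
    ⟨[⟨i, a⟩, ⟨j, b⟩, ⟨i, a⟩, ⟨j, b⁻¹⟩, ⟨i, a⁻¹⟩], by simp [ha, hb],
      by simp [List.isChain_cons_cons, hij, hij.symm]⟩
  let W₂ : CoprodI.Word M :=
    ⟨[⟨j, b⟩, ⟨i, a⟩, ⟨j, b⁻¹⟩], by simp [ha, hb],
      by simp [List.isChain_cons_cons, hij, hij.symm]⟩
  -- Reduced words are unique, and these two have different lengths.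
  have hW : W₁ = W₂ := CoprodI.Word.equiv.symm.injective <| by
    change W₁.prod = W₂.prod
    simpa [CoprodI.Word.prod, W₁, W₂, mul_assoc] using h
  simpa [W₁, W₂] using congrArg (fun W : CoprodI.Word M => W.toList.length) hW

theorem of_mul_of_mul_of_mul_inv_mul_inv_ne {v w : V} (hvw : v ≠ w) (hadj : ¬ Γ.Adj v w)
    {a : G v} {b : G w} (ha : a ≠ 1) (hb : b ≠ 1) :
    of Γ G a * of Γ G b * of Γ G a * (of Γ G b)⁻¹ * (of Γ G a)⁻¹ ≠
      of Γ G b * of Γ G a * (of Γ G b)⁻¹ := by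
  obtain ⟨φ, hφv, hφw⟩ := exists_retraction_coprodI Γ G hadj
  intro h
  have := congrArg φ h
  simp only [map_mul, map_inv, hφv, hφw] at this
  exact CoprodI.of_mul_of_mul_of_mul_inv_mul_inv_ne hvw ha hb this

theorem partialConj_not_commute_general {V : Type u} (Γ : SimpleGraph V)
    (G : V → Type uG) [∀ v, Group (G v)] [∀ v, Nontrivial (G v)]
    (gen : ∀ v, G v) (hgen : ∀ v, Subgroup.zpowers (gen v) = ⊤)
    (v w : V) (hvw : v ≠ w) (hadj : ¬ Γ.Adj v w)
    (C₀ D₀ : Set V)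
    (hC₀ : IsCompOf Γ ((star Γ v)ᶜ) C₀) (hwC₀ : w ∈ C₀)
    (hvD₀ : v ∈ D₀)
    (π₁ π₂ : MulAut (GraphProduct Γ G))
    (hπ₁ : IsPartialConj Γ G gen π₁ v C₀) (hπ₂ : IsPartialConj Γ G gen π₂ w D₀) :
    π₁ (π₂ (of Γ G (gen v))) =
      of Γ G (gen v) * of Γ G (gen w) * of Γ G (gen v) * (of Γ G (gen w))⁻¹ *
        (of Γ G (gen v))⁻¹ ∧
    π₂ (π₁ (of Γ G (gen v))) = of Γ G (gen w) * of Γ G (gen v) * (of Γ G (gen w))⁻¹ ∧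
    of Γ G (gen v) * of Γ G (gen w) * of Γ G (gen v) * (of Γ G (gen w))⁻¹ *
        (of Γ G (gen v))⁻¹ ≠
      of Γ G (gen w) * of Γ G (gen v) * (of Γ G (gen w))⁻¹ ∧
    ¬ Commute π₁ π₂ := by
  have hπ₁v : π₁ (of Γ G (gen v)) = of Γ G (gen v) :=
    hπ₁.2 v (not_mem_of_isCompOf_compl_star hC₀) _
  have eq₁ : π₁ (π₂ (of Γ G (gen v))) = of Γ G (gen v) * of Γ G (gen w) * of Γ G (gen v) *
      (of Γ G (gen w))⁻¹ * (of Γ G (gen v))⁻¹ := by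
    rw [hπ₂.1 v hvD₀, map_mul, map_mul, map_inv, hπ₁v, hπ₁.1 w hwC₀]
    group
  have eq₂ : π₂ (π₁ (of Γ G (gen v))) =
      of Γ G (gen w) * of Γ G (gen v) * (of Γ G (gen w))⁻¹ := by
    rw [hπ₁v, hπ₂.1 v hvD₀]
  have gen_ne_one : ∀ u, gen u ≠ 1 :=
    fun u h => bot_ne_top ((Subgroup.zpowers_eq_bot.2 h).symm.trans (hgen u))
  have hne := of_mul_of_mul_of_mul_inv_mul_inv_ne Γ G hvw hadj (gen_ne_one v) (gen_ne_one w)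
  refine ⟨eq₁, eq₂, hne, fun hcomm => hne ?_⟩
  rw [← eq₁, ← eq₂]
  exact DFunLike.congr_fun hcomm _

/-- The partial conjugations `π_{v,C₀}` and `π_{w,D₀}` do not commute:
`π_{v,C₀}(π_{w,D₀}(v)) = vwvw⁻¹v⁻¹` while `π_{w,D₀}(π_{v,C₀}(v)) = wvw⁻¹`, and these
elements are distinct in the graph product. -/
theorem partialConj_not_commute {V : Type u} [Finite V] (Γ : SimpleGraph V)
    (G : V → Type uG) [∀ v, Group (G v)] [∀ v, Nontrivial (G v)]
    (gen : ∀ v, G v) (hgen : ∀ v, Subgroup.zpowers (gen v) = ⊤)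
    (v w : V) (hvw : v ≠ w) (hadj : ¬ Γ.Adj v w) (hreach : Γ.Reachable v w)
    (C₀ D₀ : Set V)
    (hC₀ : IsCompOf Γ ((star Γ v)ᶜ) C₀) (hwC₀ : w ∈ C₀)
    (hD₀ : IsCompOf Γ ((star Γ w)ᶜ) D₀) (hvD₀ : v ∈ D₀)
    (π₁ π₂ : MulAut (GraphProduct Γ G))
    (hπ₁ : IsPartialConj Γ G gen π₁ v C₀) (hπ₂ : IsPartialConj Γ G gen π₂ w D₀) :
    π₁ (π₂ (of Γ G (gen v))) =
      of Γ G (gen v) * of Γ G (gen w) * of Γ G (gen v) * (of Γ G (gen w))⁻¹ *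
        (of Γ G (gen v))⁻¹ ∧
    π₂ (π₁ (of Γ G (gen v))) = of Γ G (gen w) * of Γ G (gen v) * (of Γ G (gen w))⁻¹ ∧
    of Γ G (gen v) * of Γ G (gen w) * of Γ G (gen v) * (of Γ G (gen w))⁻¹ *
        (of Γ G (gen v))⁻¹ ≠
      of Γ G (gen w) * of Γ G (gen v) * (of Γ G (gen w))⁻¹ ∧
    ¬ Commute π₁ π₂ :=
  partialConj_not_commute_general Γ G gen hgen v w hvw hadj C₀ D₀ hC₀ hwC₀ hvD₀ π₁ π₂ hπ₁ hπ₂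

end ArXiv
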